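/- arXiv:2411.02760 — 2 statements merged into one kernel-verified Lean document; each statement's English description precedes it below -/
import Mathlib

section
/- There exists a family 𝒟 of cardinality the continuum (2^{ℵ₀}) consisting of countable distance value sets, each of which is dense in (0, +∞), such that no two distinct members of 𝒟 are equivalent as distance value sets. -/
/-- A distance value set: a set of positive reals closed under
`(x, y) ↦ min (x + y) (sup Δ)` (which is just `x + y` when `Δ` is unbounded). -/
def IsDVS (Δ : Set ℝ) : Prop :=
  (∀ x ∈ Δ, 0 < x) ∧
  ∀ x ∈ Δ, ∀ y ∈ Δ,
    (BddAbove Δ → min (x + y) (sSup Δ) ∈ Δ) ∧ (¬ BddAbove Δ → x + y ∈ Δ)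

/-- `(x, y, z)` is a `Δ`-triangle. -/
def IsTriangle (Δ : Set ℝ) (x y z : ℝ) : Prop :=
  x ∈ Δ ∧ y ∈ Δ ∧ z ∈ Δ ∧ |x - y| ≤ z ∧ z ≤ x + y

/-- `f` witnesses the equivalence of the distance value sets `Δ` and `Λ`:
it is a bijection of `Δ` onto `Λ` preserving triangles in both directions. -/
def IsEquivWitness (Δ Λ : Set ℝ) (f : ℝ → ℝ) : Prop :=
  Set.BijOn f Δ Λ ∧
  ∀ x ∈ Δ, ∀ y ∈ Δ, ∀ z ∈ Δ,
    (IsTriangle Δ x y z ↔ IsTriangle Λ (f x) (f y) (f z))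

/-- Equivalence of distance value sets. -/
def DVSEquiv (Δ Λ : Set ℝ) : Prop := ∃ f : ℝ → ℝ, IsEquivWitness Δ Λ f

/-!
Fix a transcendental `t > 0` and, for `S ⊆ ℕ`, let `Δ_S = dvsOf t S` be the set of positive
reals `q + ∑_{n ∈ S} mₙ t^(n+1)` with `q ∈ ℚ≥0` and `mₙ ∈ ℕ`. Each `Δ_S` is countable, contains
`ℚ_{>0}` (so it is dense) and is closed under addition, hence an unbounded distance value set.

Let `f : Δ_S → Δ_T` witness an equivalence. Since `(x, y, y)` is a triangle iff `x ≤ 2y`, `f`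
preserves this relation, which together with density makes `f` increasing. The degenerate
triangle `(x, y, x + y)` then gives `f (x + y) = f x + f y`, so `f` is multiplication by
`c = f 1`. As `c / N = f (1 / N) ∈ Δ_T` for all `N`, `c` is rational, and transcendence of `t`
turns `t^(n+1) ∈ Δ_S ↔ c t^(n+1) ∈ Δ_T` into `n ∈ S ↔ n ∈ T`. So `S ↦ Δ_S` gives `2^ℵ₀`
pairwise inequivalent sets.
-/

open Polynomial

section Linear

variable {Δ : Set ℝ} {f : ℝ → ℝ} {x : ℝ}

theorem natCast_mul_mem (hΔ : ∀ x ∈ Δ, ∀ y ∈ Δ, x + y ∈ Δ) (hx : x ∈ Δ) {n : ℕ} (hn : 0 < n) :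
    (n : ℝ) * x ∈ Δ := by
  induction n, hn using Nat.le_induction with
  | base => simpa using hx
  | succ n _ ih => simpa [add_one_mul] using hΔ _ ih _ hx

theorem map_natCast_mul (hΔ : ∀ x ∈ Δ, ∀ y ∈ Δ, x + y ∈ Δ)
    (hf : ∀ x ∈ Δ, ∀ y ∈ Δ, f (x + y) = f x + f y) (hx : x ∈ Δ) {n : ℕ} (hn : 0 < n) :
    f (n * x) = n * f x := by
  induction n, hn using Nat.le_induction with
  | base => simp
  | succ n hn ih => simp [add_one_mul, hf _ (natCast_mul_mem hΔ hx hn) _ hx, ih]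

theorem le_of_forall_natCast_mul_lt_imp {a b : ℝ} (hb : 0 ≤ b)
    (h : ∀ m n : ℕ, 0 < m → 0 < n → n * b < m → n * a < m) : a ≤ b := by
  by_contra! hba
  obtain ⟨n, hn⟩ := exists_nat_gt (1 / (a - b))
  have hn0 : (0 : ℝ) < n := lt_trans (by have := sub_pos.2 hba; positivity) hn
  have hgap : 1 < n * a - n * b := by
    rw [div_lt_iff₀ (sub_pos.2 hba)] at hn
    linarith
  have hm := Nat.lt_floor_add_one ((n : ℝ) * b)
  have hm' := Nat.floor_le (mul_nonneg hn0.le hb)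
  have := h (⌊(n : ℝ) * b⌋₊ + 1) n (Nat.succ_pos _) (by exact_mod_cast hn0) (by push_cast; linarith)
  push_cast at this
  linarith

theorem eq_of_forall_natCast_mul_lt_iff {a b : ℝ} (ha : 0 ≤ a) (hb : 0 ≤ b)
    (h : ∀ m n : ℕ, 0 < m → 0 < n → (n * a < m ↔ n * b < m)) : a = b :=
  le_antisymm (le_of_forall_natCast_mul_lt_imp hb fun m n hm hn => (h m n hm hn).2)
    (le_of_forall_natCast_mul_lt_imp ha fun m n hm hn => (h m n hm hn).1)

theorem pos_of_map_add_of_strictMonoOn (hΔ0 : ∀ x ∈ Δ, 0 < x)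
    (hΔ : ∀ x ∈ Δ, ∀ y ∈ Δ, x + y ∈ Δ) (hf : ∀ x ∈ Δ, ∀ y ∈ Δ, f (x + y) = f x + f y)
    (hmono : StrictMonoOn f Δ) (hx : x ∈ Δ) : 0 < f x := by
  have := hmono hx (hΔ x hx x hx) (by linarith [hΔ0 x hx])
  rw [hf x hx x hx] at this
  linarith

/-- Compare `n * x` with `m * 1` inside `Δ`. -/
theorem eq_mul_of_map_add_of_strictMonoOn (hΔ0 : ∀ x ∈ Δ, 0 < x)
    (hΔ : ∀ x ∈ Δ, ∀ y ∈ Δ, x + y ∈ Δ) (h1 : 1 ∈ Δ)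
    (hf : ∀ x ∈ Δ, ∀ y ∈ Δ, f (x + y) = f x + f y) (hmono : StrictMonoOn f Δ)
    (hx : x ∈ Δ) : f x = f 1 * x := by
  have hf1 := pos_of_map_add_of_strictMonoOn hΔ0 hΔ hf hmono h1
  suffices x = f x / f 1 by rw [eq_div_iff hf1.ne'] at this; linarith
  refine eq_of_forall_natCast_mul_lt_iff (hΔ0 x hx).le
    (div_pos (pos_of_map_add_of_strictMonoOn hΔ0 hΔ hf hmono hx) hf1).le fun m n hm hn => ?_
  have hnx := natCast_mul_mem hΔ hx hn
  have hm1 := natCast_mul_mem hΔ h1 hm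
  calc (n : ℝ) * x < m ↔ (n : ℝ) * x < m * 1 := by rw [mul_one]
    _ ↔ f (n * x) < f (m * 1) := (hmono.lt_iff_lt hnx hm1).symm
    _ ↔ n * f x < m * f 1 := by rw [map_natCast_mul hΔ hf hx hn, map_natCast_mul hΔ hf h1 hm]
    _ ↔ n * (f x / f 1) < m := by rw [mul_div_assoc', div_lt_iff₀ hf1]

end Linear

section Witness

variable {Δ Λ : Set ℝ} {f : ℝ → ℝ} {x y : ℝ}

theorem IsDVS.add_mem (hΔ : IsDVS Δ) (hΔb : ¬BddAbove Δ) (hx : x ∈ Δ) (hy : y ∈ Δ) :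
    x + y ∈ Δ :=
  (hΔ.2 x hx y hy).2 hΔb

theorem not_bddAbove_of_forall_exists_mem_btwn
    (hdense : ∀ a b : ℝ, 0 < a → a < b → ∃ x ∈ Λ, a < x ∧ x < b) : ¬BddAbove Λ := by
  rintro ⟨M, hM⟩
  obtain ⟨x, hx, hMx, -⟩ := hdense (max M 0 + 1) (max M 0 + 2) (by positivity) (by linarith)
  linarith [hM hx, le_max_left M 0]

theorem isTriangle_isosceles_iff (hx : x ∈ Δ) (hy : y ∈ Δ) (hx0 : 0 < x) :
    IsTriangle Δ x y y ↔ x ≤ 2 * y := by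
  simp only [IsTriangle, hx, hy, abs_sub_le_iff, true_and]
  constructor
  · rintro ⟨⟨h, -⟩, -⟩
    linarith
  · intro h
    exact ⟨⟨by linarith, by linarith⟩, by linarith⟩

theorem isTriangle_add (hx : x ∈ Δ) (hy : y ∈ Δ) (hxy : x + y ∈ Δ) (hx0 : 0 < x) (hy0 : 0 < y) :
    IsTriangle Δ x y (x + y) :=
  ⟨hx, hy, hxy, abs_sub_le_iff.mpr ⟨by linarith, by linarith⟩, le_rfl⟩

theorem IsEquivWitness.le_two_mul_iff (hf : IsEquivWitness Δ Λ f) (hΔ : IsDVS Δ) (hΛ : IsDVS Λ)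
    (hx : x ∈ Δ) (hy : y ∈ Δ) : x ≤ 2 * y ↔ f x ≤ 2 * f y := by
  have hfx := hf.1.mapsTo hx
  rw [← isTriangle_isosceles_iff hx hy (hΔ.1 x hx),
    ← isTriangle_isosceles_iff hfx (hf.1.mapsTo hy) (hΛ.1 _ hfx)]
  exact hf.2 x hx y hy y hy

/-- If `x ≤ y` but `f y < f x`, a value `f z` strictly between `f y / 2` and `f x / 2` gives
`y ≤ 2 * z < x`. -/
theorem IsEquivWitness.monotoneOn (hf : IsEquivWitness Δ Λ f) (hΔ : IsDVS Δ) (hΛ : IsDVS Λ)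
    (hdense : ∀ a b : ℝ, 0 < a → a < b → ∃ x ∈ Λ, a < x ∧ x < b) : MonotoneOn f Δ := by
  intro x hx y hy hxy
  by_contra! hlt
  obtain ⟨w, hw, hyw, hwx⟩ :=
    hdense (f y / 2) (f x / 2) (by linarith [hΛ.1 _ (hf.1.mapsTo hy)]) (by linarith)
  obtain ⟨z, hz, rfl⟩ := hf.1.surjOn hw
  have hyz : y ≤ 2 * z := (hf.le_two_mul_iff hΔ hΛ hy hz).2 (by linarith)
  have hxz : ¬x ≤ 2 * z := fun h => by linarith [(hf.le_two_mul_iff hΔ hΛ hx hz).1 h]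
  exact hxz (by linarith)

theorem IsEquivWitness.map_add (hf : IsEquivWitness Δ Λ f) (hΔ : IsDVS Δ) (hΛ : IsDVS Λ)
    (hΔb : ¬BddAbove Δ) (hdense : ∀ a b : ℝ, 0 < a → a < b → ∃ x ∈ Λ, a < x ∧ x < b)
    (hx : x ∈ Δ) (hy : y ∈ Δ) : f (x + y) = f x + f y := by
  have hfx := hf.1.mapsTo hx
  have hfy := hf.1.mapsTo hy
  have hxy := hΔ.add_mem hΔb hx hy
  have hle : f (x + y) ≤ f x + f y :=
    ((hf.2 x hx y hy _ hxy).1 (isTriangle_add hx hy hxy (hΔ.1 x hx) (hΔ.1 y hy))).2.2.2.2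
  obtain ⟨z, hz, hfz⟩ :=
    hf.1.surjOn (hΛ.add_mem (not_bddAbove_of_forall_exists_mem_btwn hdense) hfx hfy)
  have hzle : z ≤ x + y := by
    refine ((hf.2 x hx y hy z hz).2 ?_).2.2.2.2
    rw [hfz]
    exact isTriangle_add hfx hfy (hfz ▸ hf.1.mapsTo hz) (hΛ.1 _ hfx) (hΛ.1 _ hfy)
  linarith [hf.monotoneOn hΔ hΛ hdense hz hxy hzle]

theorem IsEquivWitness.eq_mul (hf : IsEquivWitness Δ Λ f) (hΔ : IsDVS Δ) (hΛ : IsDVS Λ)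
    (hΔb : ¬BddAbove Δ) (hdense : ∀ a b : ℝ, 0 < a → a < b → ∃ x ∈ Λ, a < x ∧ x < b)
    (h1 : 1 ∈ Δ) (hx : x ∈ Δ) : f x = f 1 * x :=
  eq_mul_of_map_add_of_strictMonoOn hΔ.1 (fun _ hx _ hy => hΔ.add_mem hΔb hx hy) h1
    (fun _ hx _ hy => hf.map_add hΔ hΛ hΔb hdense hx hy)
    ((hf.monotoneOn hΔ hΛ hdense).strictMonoOn_of_injOn hf.1.injOn) hx

end Witness

/-- Polynomials `q + ∑ mₙ X^(n+1)` with `q ∈ ℚ≥0`, `mₙ ∈ ℕ`, and `mₙ = 0` unless `n ∈ S`. -/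
def IsAdmissible (S : Set ℕ) (p : ℚ[X]) : Prop :=
  0 ≤ p.coeff 0 ∧ ∀ n, ∃ m : ℕ, p.coeff (n + 1) = m ∧ (m ≠ 0 → n ∈ S)

def dvsOf (t : ℝ) (S : Set ℕ) : Set ℝ :=
  {x | 0 < x ∧ ∃ p, IsAdmissible S p ∧ aeval t p = x}

section dvsOf

variable {t : ℝ} {S T : Set ℕ} {x y : ℝ}

theorem IsAdmissible.add {p q : ℚ[X]} (hp : IsAdmissible S p) (hq : IsAdmissible S q) :
    IsAdmissible S (p + q) := by
  refine ⟨by simpa using add_nonneg hp.1 hq.1, fun n => ?_⟩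
  obtain ⟨m, hm, hmS⟩ := hp.2 n
  obtain ⟨m', hm', hm'S⟩ := hq.2 n
  refine ⟨m + m', by simp [hm, hm'], fun h => ?_⟩
  rcases Nat.eq_zero_or_pos m with rfl | h0
  · exact hm'S (by omega)
  · exact hmS h0.ne'

theorem isAdmissible_C {q : ℚ} (hq : 0 ≤ q) : IsAdmissible S (C q) :=
  ⟨by simpa using hq, fun n => ⟨0, by simp, by simp⟩⟩

theorem isAdmissible_X_pow {n : ℕ} (hn : n ∈ S) : IsAdmissible S (X ^ (n + 1)) := by
  refine ⟨by simp [coeff_X_pow], fun k => ⟨if k = n then 1 else 0, ?_, ?_⟩⟩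
  · split_ifs with h <;> simp [coeff_X_pow, h]
  · split_ifs with h
    · exact fun _ => h ▸ hn
    · exact fun h0 => (h0 rfl).elim

theorem ratCast_mem_dvsOf {q : ℚ} (hq : 0 < q) : (q : ℝ) ∈ dvsOf t S :=
  ⟨by exact_mod_cast hq, C q, isAdmissible_C hq.le, by simp⟩

theorem add_mem_dvsOf (hx : x ∈ dvsOf t S) (hy : y ∈ dvsOf t S) : x + y ∈ dvsOf t S := by
  obtain ⟨hx0, p, hp, rfl⟩ := hx
  obtain ⟨hy0, q, hq, rfl⟩ := hy
  exact ⟨add_pos hx0 hy0, p + q, hp.add hq, map_add _ _ _⟩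

theorem pow_mem_dvsOf (ht : 0 < t) {n : ℕ} (hn : n ∈ S) : t ^ (n + 1) ∈ dvsOf t S :=
  ⟨by positivity, _, isAdmissible_X_pow hn, by simp⟩

theorem mem_of_ratCast_mul_pow_mem_dvsOf (ht : Transcendental ℚ t) {q : ℚ} (hq : q ≠ 0)
    {n : ℕ} (h : (q : ℝ) * t ^ (n + 1) ∈ dvsOf t S) : n ∈ S := by
  obtain ⟨-, p, hp, hpx⟩ := h
  have hpeq : p = C q * X ^ (n + 1) := transcendental_iff_injective.mp ht (by simpa using hpx)
  obtain ⟨m, hm, hmS⟩ := hp.2 n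
  refine hmS fun hm0 => hq ?_
  simpa [hpeq, hm0] using hm

/-- A coefficient `m` of `x` would be `m + 1` times a natural coefficient of `x / (m + 1)`. -/
theorem exists_ratCast_eq_of_forall_div_mem_dvsOf (ht : Transcendental ℚ t)
    (hx : x ∈ dvsOf t S) (hdiv : ∀ N : ℕ, x / (N + 1) ∈ dvsOf t S) : ∃ q : ℚ, x = q := by
  obtain ⟨-, p, hp, rfl⟩ := hx
  have hcoeff : ∀ k, p.coeff (k + 1) = 0 := by
    intro k
    obtain ⟨m, hm, -⟩ := hp.2 k
    obtain ⟨-, pN, hpN, hpNx⟩ := hdiv m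
    have hpeq : p = C ((m : ℚ) + 1) * pN :=
      transcendental_iff_injective.mp ht (by simp [hpNx]; field_simp)
    obtain ⟨m', hm', -⟩ := hpN.2 k
    have hmm' : m = (m + 1) * m' := by
      have := congrArg (coeff · (k + 1)) hpeq
      simp only [coeff_C_mul, hm, hm'] at this
      exact_mod_cast this
    rcases m' with _ | m'
    · rw [hm, hmm', mul_zero, Nat.cast_zero]
    · nlinarith
  refine ⟨p.coeff 0, ?_⟩
  conv_lhs => rw [show p = C (p.coeff 0) from Polynomial.ext fun n => by
    cases n <;> simp [coeff_C, hcoeff]]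
  simp

theorem exists_mem_dvsOf_btwn (a b : ℝ) (ha : 0 < a) (hab : a < b) :
    ∃ x ∈ dvsOf t S, a < x ∧ x < b := by
  obtain ⟨q, haq, hqb⟩ := exists_rat_btwn hab
  exact ⟨q, ratCast_mem_dvsOf (by exact_mod_cast ha.trans haq), haq, hqb⟩

theorem not_bddAbove_dvsOf : ¬BddAbove (dvsOf t S) :=
  not_bddAbove_of_forall_exists_mem_btwn exists_mem_dvsOf_btwn

theorem isDVS_dvsOf : IsDVS (dvsOf t S) :=
  ⟨fun _ hx => hx.1, fun _ hx _ hy =>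
    ⟨fun h => absurd h not_bddAbove_dvsOf, fun _ => add_mem_dvsOf hx hy⟩⟩

theorem countable_dvsOf : (dvsOf t S).Countable := by
  have : Countable ℚ[X] := (AddMonoidAlgebra.coeff_injective.comp toFinsupp_injective).countable
  refine (Set.countable_range (aeval t : ℚ[X] → ℝ)).mono ?_
  rintro _ ⟨-, p, -, rfl⟩
  exact ⟨p, rfl⟩

theorem dvsOf_injective (ht : Transcendental ℚ t) (ht0 : 0 < t) : Function.Injective (dvsOf t) := by
  intro S T h
  ext n
  have key : ∀ {S T : Set ℕ}, dvsOf t S = dvsOf t T → n ∈ S → n ∈ T := fun h hn =>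
    mem_of_ratCast_mul_pow_mem_dvsOf ht one_ne_zero (by simpa [← h] using pow_mem_dvsOf ht0 hn)
  exact ⟨key h, key h.symm⟩

theorem eq_of_dvsEquiv_dvsOf (ht : Transcendental ℚ t) (ht0 : 0 < t)
    (h : DVSEquiv (dvsOf t S) (dvsOf t T)) : S = T := by
  obtain ⟨f, hf⟩ := h
  have hlin : ∀ x ∈ dvsOf t S, f x = f 1 * x := fun _ hx =>
    hf.eq_mul isDVS_dvsOf isDVS_dvsOf not_bddAbove_dvsOf exists_mem_dvsOf_btwn
      (by exact_mod_cast ratCast_mem_dvsOf one_pos) hx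
  have h1 : (1 : ℝ) ∈ dvsOf t S := by exact_mod_cast ratCast_mem_dvsOf one_pos
  obtain ⟨c, hc⟩ := exists_ratCast_eq_of_forall_div_mem_dvsOf ht (hf.1.mapsTo h1) fun N => by
    have hN : ((1 / (N + 1) : ℚ) : ℝ) ∈ dvsOf t S := ratCast_mem_dvsOf (by positivity)
    have hfN := hf.1.mapsTo hN
    rw [hlin _ hN] at hfN
    simpa [div_eq_mul_inv] using hfN
  have hc0 : c ≠ 0 := by
    rintro rfl
    simpa [hc] using (hf.1.mapsTo h1).1
  ext n
  constructor
  · intro hn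
    have := hf.1.mapsTo (pow_mem_dvsOf ht0 hn)
    rw [hlin _ (pow_mem_dvsOf ht0 hn), hc] at this
    exact mem_of_ratCast_mul_pow_mem_dvsOf ht hc0 this
  · intro hn
    obtain ⟨x, hx, hfx⟩ := hf.1.surjOn (pow_mem_dvsOf ht0 hn)
    rw [hlin x hx, hc] at hfx
    have hxeq : x = (c⁻¹ : ℚ) * t ^ (n + 1) := by
      rw [← hfx]; push_cast; field_simp
    exact mem_of_ratCast_mul_pow_mem_dvsOf ht (inv_ne_zero hc0) (hxeq ▸ hx)

end dvsOf

theorem exists_pos_transcendental : ∃ t : ℝ, 0 < t ∧ Transcendental ℚ t := by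
  refine ⟨liouvilleNumber 3, ?_, fun H => ?_⟩
  · exact (LiouvilleNumber.summable (by norm_num)).tsum_pos (fun _ => by positivity) 0
      (by positivity)
  · exact (liouville_liouvilleNumber (m := 3) (by norm_num)).transcendental
      ((IsFractionRing.isAlgebraic_iff ℤ ℚ ℝ).mpr H)

/-- There is a family of continuum many countable distance value sets, each dense
in `(0, +∞)`, which are pairwise inequivalent. -/
theorem exists_continuum_pairwise_inequivalent_dvs :
    ∃ 𝒟 : Set (Set ℝ), Cardinal.mk 𝒟 = Cardinal.continuum ∧
      (∀ Δ ∈ 𝒟, IsDVS Δ ∧ Δ.Countable ∧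
        ∀ a b : ℝ, 0 < a → a < b → ∃ x ∈ Δ, a < x ∧ x < b) ∧
      ∀ Δ ∈ 𝒟, ∀ Λ ∈ 𝒟, Δ ≠ Λ → ¬ DVSEquiv Δ Λ := by
  obtain ⟨t, ht0, ht⟩ := exists_pos_transcendental
  refine ⟨Set.range (dvsOf t), ?_, ?_, ?_⟩
  · rw [Cardinal.mk_range_eq _ (dvsOf_injective ht ht0), Cardinal.mk_set, Cardinal.mk_nat,
      Cardinal.two_power_aleph0]
  · rintro _ ⟨S, rfl⟩
    exact ⟨isDVS_dvsOf, countable_dvsOf, exists_mem_dvsOf_btwn⟩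
  · rintro _ ⟨S, rfl⟩ _ ⟨T, rfl⟩ hne h
    exact hne (congrArg _ (eq_of_dvsEquiv_dvsOf ht ht0 h))
end

section
/- Let Δ and Λ be distance value sets with inf Δ = 0, and let f : Δ → Λ be a witness of their equivalence. If x, y, and x + y all belong to Δ, then f(x + y) = f(x) + f(y). -/
/-!
A witness `f` preserves and reflects the relation `c + c < a`, since `(c, c, a)` fails to be a
triangle exactly when `a > c + c`. Because `Δ` has arbitrarily small elements it is dense below
its supremum, so between `a / 2` and `b / 2` there is some `c ∈ Δ`; comparing `f a` and `f b`
with `2 f c` shows that `f` is strictly monotone. Pulling back halvings shows that `Λ` also has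
arbitrarily small elements, hence is dense as well. Now the triangle `(x, y, x + y)` gives
`f (x + y) ≤ f x + f y`; if this were strict, an element `f x'` of `Λ` just below `f x` would
still form a triangle with `f y` and `f (x + y)`, and reflecting it gives `x ≤ x'`, contradicting
`f x' < f x`.
-/

lemma IsDVS.add_mem_s9 {S : Set ℝ} (hS : IsDVS S) {a b : ℝ} (ha : a ∈ S) (hb : b ∈ S)
    (hab : BddAbove S → a + b ≤ sSup S) : a + b ∈ S := by
  by_cases hbdd : BddAbove S
  · simpa only [min_eq_left (hab hbdd)] using (hS.2 a ha b hb).1 hbdd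
  · exact (hS.2 a ha b hb).2 hbdd

lemma IsDVS.exists_mem_Ioo {S : Set ℝ} (hS : IsDVS S) (hsmall : ∀ δ > 0, ∃ ε ∈ S, ε < δ)
    {u v w : ℝ} (hu : 0 ≤ u) (huv : u < v) (hw : w ∈ S) (hvw : v ≤ w) :
    ∃ c ∈ S, c ∈ Set.Ioo u v := by
  obtain ⟨ε, hε, hεlt⟩ := hsmall (v - u) (by linarith)
  -- an element of `S` within `ε` of `sSup T` jumps past `u`, but not past `v`, when `ε` is added
  set T := {c ∈ S | c ≤ u}
  by_cases hT : T.Nonempty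
  · have hbdd : BddAbove T := ⟨u, fun c hc => hc.2⟩
    obtain ⟨c, ⟨hc, hcu⟩, hlt⟩ := exists_lt_of_lt_csSup hT (sub_lt_self (sSup T) (hS.1 ε hε))
    have hsum : c + ε < v := by linarith
    have hmem : c + ε ∈ S :=
      hS.add_mem_s9 hc hε fun h => hsum.le.trans (hvw.trans (le_csSup h hw))
    refine ⟨c + ε, hmem, ?_, hsum⟩
    by_contra! hle
    linarith [le_csSup hbdd ⟨hmem, hle⟩]
  · refine ⟨ε, hε, ?_, by linarith⟩
    by_contra! hle
    exact hT ⟨ε, hε, hle⟩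

lemma exists_mem_lt_of_forall_exists_add_self_lt {S : Set ℝ} (hS : S.Nonempty)
    (hhalf : ∀ b ∈ S, ∃ η ∈ S, η + η < b) : ∀ δ > 0, ∃ η ∈ S, η < δ := by
  obtain ⟨b, hb⟩ := hS
  have hiter : ∀ n : ℕ, ∃ η ∈ S, 2 ^ n * η ≤ b := by
    intro n
    induction n with
    | zero => exact ⟨b, hb, by simp⟩
    | succ n ih =>
      obtain ⟨η, hη, hle⟩ := ih
      obtain ⟨η', hη', hlt⟩ := hhalf η hη
      refine ⟨η', hη', ?_⟩
      calc 2 ^ (n + 1) * η' = 2 ^ n * (η' + η') := by ring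
        _ ≤ 2 ^ n * η := by gcongr
        _ ≤ b := hle
  intro δ hδ
  obtain ⟨n, hn⟩ := pow_unbounded_of_one_lt (b / δ) one_lt_two
  obtain ⟨η, hη, hle⟩ := hiter n
  refine ⟨η, hη, lt_of_mul_lt_mul_left ?_ (pow_nonneg zero_le_two n)⟩
  linarith [(div_lt_iff₀ hδ).1 hn]

lemma isTriangle_self_self_iff {S : Set ℝ} (hS : ∀ x ∈ S, 0 < x) {c a : ℝ} (hc : c ∈ S)
    (ha : a ∈ S) : IsTriangle S c c a ↔ a ≤ c + c := by
  simp [IsTriangle, hc, ha, (hS a ha).le]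

namespace IsEquivWitness

variable {Δ Λ : Set ℝ} {f : ℝ → ℝ}

lemma add_self_lt_iff (hf : IsEquivWitness Δ Λ f) (hΔ : ∀ x ∈ Δ, 0 < x) (hΛ : ∀ x ∈ Λ, 0 < x)
    {c a : ℝ} (hc : c ∈ Δ) (ha : a ∈ Δ) : c + c < a ↔ f c + f c < f a := by
  rw [← not_le, ← not_le, ← isTriangle_self_self_iff hΔ hc ha,
    ← isTriangle_self_self_iff hΛ (hf.1.mapsTo hc) (hf.1.mapsTo ha)]
  exact not_congr (hf.2 c hc c hc a ha)

lemma strictMonoOn (hf : IsEquivWitness Δ Λ f) (hΔ : IsDVS Δ)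
    (hΔsmall : ∀ δ > 0, ∃ ε ∈ Δ, ε < δ) (hΛ : ∀ x ∈ Λ, 0 < x) : StrictMonoOn f Δ := by
  intro a ha b hb hab
  obtain ⟨c, hc, hac, hcb⟩ := hΔ.exists_mem_Ioo hΔsmall (u := a / 2) (v := b / 2)
    (by linarith [hΔ.1 a ha]) (by linarith) hb (by linarith [hΔ.1 b hb])
  have hcb' : f c + f c < f b := (hf.add_self_lt_iff hΔ.1 hΛ hc hb).1 (by linarith)
  have hac' : ¬ f c + f c < f a := mt (hf.add_self_lt_iff hΔ.1 hΛ hc ha).2 (by linarith)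
  linarith

lemma exists_mem_lt (hf : IsEquivWitness Δ Λ f) (hΔ : ∀ x ∈ Δ, 0 < x)
    (hΔsmall : ∀ δ > 0, ∃ ε ∈ Δ, ε < δ) (hΛ : ∀ x ∈ Λ, 0 < x) : ∀ δ > 0, ∃ η ∈ Λ, η < δ := by
  obtain ⟨a, ha, -⟩ := hΔsmall 1 one_pos
  refine exists_mem_lt_of_forall_exists_add_self_lt ⟨f a, hf.1.mapsTo ha⟩ fun b hb => ?_
  obtain ⟨a, ha, rfl⟩ := hf.1.surjOn hb
  obtain ⟨ε, hε, hεa⟩ := hΔsmall (a / 2) (by linarith [hΔ a ha])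
  exact ⟨f ε, hf.1.mapsTo hε, (hf.add_self_lt_iff hΔ hΛ hε ha).1 (by linarith)⟩

theorem map_add_s9 (hf : IsEquivWitness Δ Λ f) (hΔ : IsDVS Δ) (hΛ : IsDVS Λ)
    (hΔsmall : ∀ δ > 0, ∃ ε ∈ Δ, ε < δ) {x y : ℝ} (hx : x ∈ Δ) (hy : y ∈ Δ)
    (hxy : x + y ∈ Δ) : f (x + y) = f x + f y := by
  have hmono := hf.strictMonoOn hΔ hΔsmall hΛ.1
  have hx0 := hΔ.1 x hx
  have hy0 := hΔ.1 y hy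
  obtain ⟨-, hfy, -, hdiff, hle⟩ : IsTriangle Λ (f x) (f y) (f (x + y)) :=
    (hf.2 x hx y hy _ hxy).1 ⟨hx, hy, hxy, abs_sub_le_iff.2 ⟨by linarith, by linarith⟩, le_rfl⟩
  refine hle.antisymm (not_lt.1 fun hlt => ?_)
  have hfy_lt : f y < f (x + y) := hmono hy hxy (by linarith)
  obtain ⟨x', hx', hx'_gt, hx'_lt⟩ : ∃ x' ∈ Δ, f x' ∈ Set.Ioo (f (x + y) - f y) (f x) := by
    obtain ⟨u, hu, hu_mem⟩ := hΛ.exists_mem_Ioo (hf.exists_mem_lt hΔ.1 hΔsmall hΛ.1)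
      (u := f (x + y) - f y) (v := f x) (by linarith) (by linarith) (hf.1.mapsTo hx) le_rfl
    obtain ⟨x', hx', rfl⟩ := hf.1.surjOn hu
    exact ⟨x', hx', hu_mem⟩
  have hfx'0 := hΛ.1 _ (hf.1.mapsTo hx')
  have hdiff' := (abs_sub_le_iff.1 hdiff).1
  obtain ⟨-, -, -, -, hxy_le⟩ : IsTriangle Δ x' y (x + y) :=
    (hf.2 x' hx' y hy _ hxy).2 ⟨hf.1.mapsTo hx', hfy, hf.1.mapsTo hxy,
      abs_sub_le_iff.2 ⟨by linarith, by linarith⟩, by linarith⟩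
  have hfx_le : f x ≤ f x' := (hmono.le_iff_le hx hx').2 (by linarith)
  linarith

end IsEquivWitness

/-- A witness of equivalence of distance value sets (the first having infimum
zero) is additive. -/
theorem witness_additive (Δ Λ : Set ℝ) (hΔ : IsDVS Δ) (hΛ : IsDVS Λ)
    (hΔ0 : sInf Δ = 0) (f : ℝ → ℝ) (hf : IsEquivWitness Δ Λ f)
    (x y : ℝ) (hx : x ∈ Δ) (hy : y ∈ Δ) (hxy : x + y ∈ Δ) :
    f (x + y) = f x + f y :=
  hf.map_add_s9 hΔ hΛ (fun _ hδ => exists_lt_of_csInf_lt ⟨x, hx⟩ (hΔ0 ▸ hδ)) hx hy hxy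
end
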